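/- Let λ ∈ ℂ^n and let 1 ≤ i, j ≤ n−1 with |i − j| > 1. If λ ≤ s_j * (s_i * λ), then λ ≤ s_i * λ and λ ≤ s_j * λ. -/
import Mathlib


open Finset

/-- The 1-based `i`-th coordinate of a weight `λ ∈ ℂ^n` (0 if out of range). -/
def coord {n : ℕ} (lam : Fin n → ℂ) (i : ℕ) : ℂ :=
  if h : 1 ≤ i ∧ i ≤ n then lam ⟨i - 1, by omega⟩ else 0

/-- The star action of the generator `s_i` (1 ≤ i ≤ n-1) on weights:
swap coordinates `i` and `i+1` if their sum is nonzero, otherwise replace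
`(λ_i, λ_{i+1})` by `(λ_{i+1} - 1, λ_i + 1)`. -/
noncomputable def sStar {n : ℕ} (i : ℕ) (lam : Fin n → ℂ) : Fin n → ℂ := fun j =>
  if (j : ℕ) + 1 = i then
    (if coord lam i + coord lam (i + 1) = 0 then coord lam (i + 1) - 1 else coord lam (i + 1))
  else if (j : ℕ) = i then
    (if coord lam i + coord lam (i + 1) = 0 then coord lam i + 1 else coord lam i)
  else lam j

/-- The partial order on weights: `μ ≤ ν` iff each partial sum
`Σ_{j=1}^i (ν_j - μ_j)` (1 ≤ i ≤ n-1) is a nonnegative integer and the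
total sum `Σ_{j=1}^n (ν_j - μ_j)` is zero. -/
def wle {n : ℕ} (mu nu : Fin n → ℂ) : Prop :=
  (∀ i : ℕ, 1 ≤ i → i ≤ n - 1 →
    ∃ m : ℕ, ∑ j ∈ Finset.Icc 1 i, (coord nu j - coord mu j) = (m : ℂ)) ∧
  ∑ j ∈ Finset.Icc 1 n, (coord nu j - coord mu j) = 0

/-- Strict inequality of weights. -/
def wlt {n : ℕ} (mu nu : Fin n → ℂ) : Prop := wle mu nu ∧ mu ≠ nu

/-- `a ≻ b` iff `a - b ∈ ℤ_{>0}` or `a = b = 0`. -/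
def csucc (a b : ℂ) : Prop := (∃ m : ℤ, 0 < m ∧ a - b = (m : ℂ)) ∨ (a = 0 ∧ b = 0)

/-- `starDesc j k λ = s_j s_{j+1} ⋯ s_k * λ` (apply `s_k` first, `s_j` last);
equals `λ` when `j > k`. -/
noncomputable def starDesc {n : ℕ} (j k : ℕ) (lam : Fin n → ℂ) : Fin n → ℂ :=
  (List.range' j (k + 1 - j)).foldr (fun i mu => sStar i mu) lam

/-- `starAsc j k λ = s_k s_{k-1} ⋯ s_j * λ` (apply `s_j` first, `s_k` last);
equals `λ` when `j > k`. -/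
noncomputable def starAsc {n : ℕ} (j k : ℕ) (lam : Fin n → ℂ) : Fin n → ℂ :=
  (List.range' j (k + 1 - j)).foldl (fun mu i => sStar i mu) lam
lemma coord_sStar_ne {n : ℕ} (lam : Fin n → ℂ) (i t : ℕ) (h1 : t ≠ i) (h2 : t ≠ i + 1) :
    coord (sStar i lam) t = coord lam t := by
  unfold coord
  split_ifs with h
  · show sStar i lam ⟨t - 1, by omega⟩ = lam ⟨t - 1, by omega⟩
    simp only [sStar]
    rw [if_neg (by show ¬(t - 1 + 1 = i); omega), if_neg (by show ¬(t - 1 = i); omega)]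
  · rfl

lemma coord_sStar_self {n : ℕ} (lam : Fin n → ℂ) (i : ℕ) (h1 : 1 ≤ i) (h2 : i ≤ n) :
    coord (sStar i lam) i =
      if coord lam i + coord lam (i + 1) = 0 then coord lam (i + 1) - 1 else coord lam (i + 1) := by
  have : coord (sStar i lam) i = sStar i lam ⟨i - 1, by omega⟩ := by
    unfold coord; rw [dif_pos ⟨h1, h2⟩]
  rw [this]
  simp only [sStar]
  rw [if_pos (by show i - 1 + 1 = i; omega)]

lemma coord_sStar_succ {n : ℕ} (lam : Fin n → ℂ) (i : ℕ) (h2 : i + 1 ≤ n) :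
    coord (sStar i lam) (i + 1) =
      if coord lam i + coord lam (i + 1) = 0 then coord lam i + 1 else coord lam i := by
  have : coord (sStar i lam) (i + 1) = sStar i lam ⟨i + 1 - 1, by omega⟩ := by
    unfold coord; rw [dif_pos ⟨by omega, h2⟩]
  rw [this]
  simp only [sStar]
  rw [if_neg (by show ¬(i + 1 - 1 + 1 = i); omega), if_pos (by show i + 1 - 1 = i; omega)]

lemma sStar_pair {n : ℕ} (lam : Fin n → ℂ) (i : ℕ) (h1 : 1 ≤ i) (h2 : i + 1 ≤ n) :
    coord (sStar i lam) i + coord (sStar i lam) (i + 1) = coord lam i + coord lam (i + 1) := by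
  rw [coord_sStar_self lam i h1 (by omega), coord_sStar_succ lam i h2]
  split_ifs <;> ring

lemma sum_two (f : ℕ → ℂ) (a b : ℕ) (ha : 1 ≤ a) (hab : a < b)
    (hf : ∀ t, t ≠ a → t ≠ b → f t = 0) (k : ℕ) :
    ∑ t ∈ Finset.Icc 1 k, f t = (if a ≤ k then f a else 0) + (if b ≤ k then f b else 0) := by
  induction k with
  | zero => rw [if_neg (by omega), if_neg (by omega)]; simp
  | succ k ih =>
    rw [Finset.sum_Icc_succ_top (by omega), ih]
    by_cases h1 : k + 1 = a
    · rw [if_neg (by omega), if_neg (by omega), if_pos (by omega), if_neg (by omega), h1]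
      ring
    · by_cases h2 : k + 1 = b
      · rw [if_pos (by omega), if_neg (by omega), if_pos (by omega), if_pos (by omega), h2]
        ring
      · rw [hf (k + 1) h1 h2]
        have e1 : (a ≤ k + 1) ↔ (a ≤ k) := by omega
        have e2 : (b ≤ k + 1) ↔ (b ≤ k) := by omega
        rw [if_congr e1 rfl rfl, if_congr e2 rfl rfl]
        ring

lemma aux_lemma (n a b : ℕ) (fa gb : ℕ → ℂ) (hn : 2 ≤ n)
    (h1a : 1 ≤ a) (hab : a + 1 < b) (hb : b ≤ n - 1)
    (hfs : ∀ t, t ≠ a → t ≠ a + 1 → fa t = 0) (hf0 : fa a + fa (a + 1) = 0)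
    (hgs : ∀ t, t ≠ b → t ≠ b + 1 → gb t = 0) (hg0 : gb b + gb (b + 1) = 0)
    (H : ∀ k, 1 ≤ k → k ≤ n - 1 → ∃ m : ℕ, ∑ t ∈ Finset.Icc 1 k, (fa t + gb t) = (m : ℂ)) :
    ((∀ k, 1 ≤ k → k ≤ n - 1 → ∃ m : ℕ, ∑ t ∈ Finset.Icc 1 k, fa t = (m : ℂ)) ∧
      ∑ t ∈ Finset.Icc 1 n, fa t = 0) ∧
    ((∀ k, 1 ≤ k → k ≤ n - 1 → ∃ m : ℕ, ∑ t ∈ Finset.Icc 1 k, gb t = (m : ℂ)) ∧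
      ∑ t ∈ Finset.Icc 1 n, gb t = 0) := by
  have h1b : 1 ≤ b := by omega
  have Sa := sum_two fa a (a + 1) h1a (by omega) hfs
  have Sb := sum_two gb b (b + 1) h1b (by omega) hgs
  obtain ⟨ma, hma⟩ := H a h1a (by omega)
  rw [Finset.sum_add_distrib, Sa, Sb, if_pos le_rfl, if_neg (by omega), if_neg (by omega),
    if_neg (by omega)] at hma
  obtain ⟨mb, hmb⟩ := H b h1b hb
  rw [Finset.sum_add_distrib, Sa, Sb, if_pos (by omega), if_pos (by omega), if_pos le_rfl,
    if_neg (by omega)] at hmb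
  have hfaa : fa a = (ma : ℂ) := by linear_combination hma
  have hgbb : gb b = (mb : ℂ) := by linear_combination hmb - hf0
  constructor
  · constructor
    · intro k hk1 hk2
      rw [Sa]
      by_cases c1 : a ≤ k
      · by_cases c2 : a + 1 ≤ k
        · exact ⟨0, by rw [if_pos c1, if_pos c2]; simpa using hf0⟩
        · exact ⟨ma, by rw [if_pos c1, if_neg c2, hfaa]; ring⟩
      · exact ⟨0, by rw [if_neg c1, if_neg (by omega)]; simp⟩
    · rw [Sa, if_pos (by omega), if_pos (by omega)]
      exact hf0
  · constructor
    · intro k hk1 hk2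
      rw [Sb]
      by_cases c1 : b ≤ k
      · by_cases c2 : b + 1 ≤ k
        · exact ⟨0, by rw [if_pos c1, if_pos c2]; simpa using hg0⟩
        · exact ⟨mb, by rw [if_pos c1, if_neg c2, hgbb]; ring⟩
      · exact ⟨0, by rw [if_neg c1, if_neg (by omega)]; simp⟩
    · rw [Sb, if_pos (by omega), if_pos (by omega)]
      exact hg0

lemma hdec_lemma {n : ℕ} (hn : 2 ≤ n) (lam : Fin n → ℂ) (a b : ℕ)
    (h1a : 1 ≤ a) (h1b : 1 ≤ b) (han : a ≤ n - 1) (hbn : b ≤ n - 1)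
    (hd : a + 1 < b ∨ b + 1 < a) (t : ℕ) :
    coord (sStar b (sStar a lam)) t - coord lam t =
      (coord (sStar a lam) t - coord lam t) + (coord (sStar b lam) t - coord lam t) := by
  by_cases h1 : t = b
  · subst h1
    rw [coord_sStar_self (sStar a lam) t h1b (by omega),
      coord_sStar_self lam t h1b (by omega),
      coord_sStar_ne lam a t (by omega) (by omega),
      coord_sStar_ne lam a (t + 1) (by omega) (by omega)]
    split_ifs <;> ring
  · by_cases h2 : t = b + 1
    · subst h2
      rw [coord_sStar_succ (sStar a lam) b (by omega),
        coord_sStar_succ lam b (by omega),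
        coord_sStar_ne lam a b (by omega) (by omega),
        coord_sStar_ne lam a (b + 1) (by omega) (by omega)]
      split_ifs <;> ring
    · rw [coord_sStar_ne (sStar a lam) b t h1 h2, coord_sStar_ne lam b t h1 h2]
      ring
theorem stmt16 (n : ℕ) (hn : 2 ≤ n) (lam : Fin n → ℂ) (i j : ℕ)
    (hi1 : 1 ≤ i) (hi2 : i ≤ n - 1) (hj1 : 1 ≤ j) (hj2 : j ≤ n - 1)
    (hij : 1 < |(i : ℤ) - (j : ℤ)|)
    (h : wle lam (sStar j (sStar i lam))) :
    wle lam (sStar i lam) ∧ wle lam (sStar j lam) := by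
  have hd : i + 1 < j ∨ j + 1 < i := by
    rcases lt_abs.mp hij with h' | h' <;> omega
  have hdec := hdec_lemma hn lam i j hi1 hj1 hi2 hj2 hd
  rcases hd with hlt | hlt
  · -- i + 1 < j : apply aux with a := i, b := j
    have key := aux_lemma n i j
      (fun t => coord (sStar i lam) t - coord lam t)
      (fun t => coord (sStar j lam) t - coord lam t) hn hi1 hlt hj2
      (fun t u v => by show coord (sStar i lam) t - coord lam t = 0; rw [coord_sStar_ne lam i t u v]; ring)
      (by have := sStar_pair lam i hi1 (by omega); linear_combination this)
      (fun t u v => by show coord (sStar j lam) t - coord lam t = 0; rw [coord_sStar_ne lam j t u v]; ring)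
      (by have := sStar_pair lam j hj1 (by omega); linear_combination this)
      (fun k hk1 hk2 => by
        obtain ⟨m, hm⟩ := h.1 k hk1 hk2
        exact ⟨m, by rw [← hm]; exact Finset.sum_congr rfl fun t _ => (hdec t).symm⟩)
    exact ⟨⟨key.1.1, key.1.2⟩, ⟨key.2.1, key.2.2⟩⟩
  · -- j + 1 < i : apply aux with a := j, b := i
    have key := aux_lemma n j i
      (fun t => coord (sStar j lam) t - coord lam t)
      (fun t => coord (sStar i lam) t - coord lam t) hn hj1 hlt hi2
      (fun t u v => by show coord (sStar j lam) t - coord lam t = 0; rw [coord_sStar_ne lam j t u v]; ring)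
      (by have := sStar_pair lam j hj1 (by omega); linear_combination this)
      (fun t u v => by show coord (sStar i lam) t - coord lam t = 0; rw [coord_sStar_ne lam i t u v]; ring)
      (by have := sStar_pair lam i hi1 (by omega); linear_combination this)
      (fun k hk1 hk2 => by
        obtain ⟨m, hm⟩ := h.1 k hk1 hk2
        refine ⟨m, by rw [← hm]; exact Finset.sum_congr rfl fun t _ => by rw [hdec t]; ring⟩)
    exact ⟨⟨key.2.1, key.2.2⟩, ⟨key.1.1, key.1.2⟩⟩
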